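/- Let a, b, ε > 0 and d, m positive integers. Let X ⊆ ℝ^{d×n} be a set of matrices with ‖X‖_F ≤ b for all X ∈ X, and let W = {W ∈ ℝ^{m×d} : ‖W‖₁ ≤ a} where ‖·‖₁ is the entrywise 1-norm. Then there exists a finite set C ⊆ ℝ^{m×d} with |C| ≤ (2dm)^{⌈a²b²/ε²⌉} such that for every X ∈ X and every W ∈ W, there exists W' ∈ C with ‖WX − W'X‖_F ≤ ε. -/

import Mathlib

attribute [local instance] Matrix.frobeniusNormedAddCommGroup

open Finset

section maureyAux
variable {ι : Type*} [Fintype ι] [DecidableEq ι] {k : ℕ}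

lemma maurey_max_sub (x : ℝ) : max x 0 - max (-x) 0 = x := by
  rcases le_total 0 x with h | h
  · rw [max_eq_left h, max_eq_right (neg_nonpos.mpr h)]; ring
  · rw [max_eq_right h, max_eq_left (neg_nonneg.mpr h)]; ring

lemma maurey_max_add (x : ℝ) : max x 0 + max (-x) 0 = |x| := by
  rcases le_total 0 x with h | h
  · rw [max_eq_left h, max_eq_right (neg_nonpos.mpr h), abs_of_nonneg h]; ring
  · rw [max_eq_right h, max_eq_left (neg_nonneg.mpr h), abs_of_nonpos h]; ring

lemma maurey_frob_sq {m n : ℕ} (M : Matrix (Fin m) (Fin n) ℝ) :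
    ‖M‖ ^ 2 = ∑ i, ∑ j, (M i j) ^ 2 := by
  rw [Matrix.frobenius_norm_def]
  have h1 : ∀ (i : Fin m) (j : Fin n), ‖M i j‖ ^ (2:ℝ) = (M i j) ^ 2 := by
    intro i j
    rw [Real.rpow_two]
    simp [Real.norm_eq_abs, sq_abs]
  simp_rw [h1]
  have hS : (0:ℝ) ≤ ∑ i, ∑ j, (M i j) ^ 2 :=
    Finset.sum_nonneg fun i _ => Finset.sum_nonneg fun j _ => sq_nonneg _
  rw [← Real.rpow_natCast ((∑ i, ∑ j, (M i j) ^ 2) ^ (1/2 : ℝ)) 2, ← Real.rpow_mul hS]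
  norm_num
lemma maurey_prod_ite_pair (l1 l2 : Fin k) (hne : l1 ≠ l2) (g h : Fin k → ℝ) :
    ∏ l, (if l = l1 then g l else if l = l2 then h l else 1) = g l1 * h l2 := by
  have step : ∀ l : Fin k, (if l = l1 then g l else if l = l2 then h l else 1)
      = (if l = l1 then g l else 1) * (if l = l2 then h l else 1) := by
    intro l
    by_cases h1 : l = l1
    · subst h1; simp [hne]
    · by_cases h2 : l = l2 <;> simp [h1, h2, Ne.symm hne]
  simp_rw [step]
  rw [Finset.prod_mul_distrib, Finset.prod_ite_eq' Finset.univ l1 g,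
    Finset.prod_ite_eq' Finset.univ l2 h]
  simp

lemma maurey_exp_one (p g : ι → ℝ) (hp : ∑ s, p s = 1) (l1 : Fin k) :
    ∑ t : Fin k → ι, (∏ l, p (t l)) * g (t l1) = ∑ s, p s * g s := by
  have step : ∀ t : Fin k → ι, (∏ l, p (t l)) * g (t l1)
      = ∏ l, (p (t l) * (if l = l1 then g (t l) else 1)) := by
    intro t
    rw [Finset.prod_mul_distrib, Finset.prod_ite_eq' Finset.univ l1 (fun l => g (t l))]
    simp
  simp_rw [step]
  rw [← Fintype.prod_sum (fun l s => p s * (if l = l1 then g s else 1))]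
  have : ∀ l : Fin k, (∑ s, p s * (if l = l1 then g s else 1))
      = (if l = l1 then ∑ s, p s * g s else 1) := by
    intro l
    by_cases h1 : l = l1 <;> simp [h1, hp]
  simp_rw [this]
  rw [Finset.prod_ite_eq' Finset.univ l1 (fun _ => ∑ s, p s * g s)]
  simp

lemma maurey_exp_pair (p g h : ι → ℝ) (hp : ∑ s, p s = 1) (l1 l2 : Fin k) (hne : l1 ≠ l2) :
    ∑ t : Fin k → ι, (∏ l, p (t l)) * (g (t l1) * h (t l2))
      = (∑ s, p s * g s) * (∑ s, p s * h s) := by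
  have step : ∀ t : Fin k → ι, (∏ l, p (t l)) * (g (t l1) * h (t l2))
      = ∏ l, (p (t l) * (if l = l1 then g (t l) else if l = l2 then h (t l) else 1)) := by
    intro t
    rw [Finset.prod_mul_distrib,
      maurey_prod_ite_pair l1 l2 hne (fun l => g (t l)) (fun l => h (t l))]
  simp_rw [step]
  rw [← Fintype.prod_sum (fun l s => p s * (if l = l1 then g s else if l = l2 then h s else 1))]
  have : ∀ l : Fin k, (∑ s, p s * (if l = l1 then g s else if l = l2 then h s else 1))
      = (if l = l1 then ∑ s, p s * g s else if l = l2 then ∑ s, p s * h s else 1) := by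
    intro l
    by_cases h1 : l = l1
    · simp [h1]
    · by_cases h2 : l = l2 <;> simp [h1, h2, hp]
  simp_rw [this]
  exact maurey_prod_ite_pair l1 l2 hne _ _
lemma maurey_var_le (p x : ι → ℝ) (hp1 : ∑ s, p s = 1) :
    ∑ s, p s * (x s - ∑ s', p s' * x s') ^ 2 ≤ ∑ s, p s * (x s) ^ 2 := by
  set c := ∑ s', p s' * x s' with hc
  have expand : ∑ s, p s * (x s - c) ^ 2
      = (∑ s, p s * x s ^ 2) - 2 * c * (∑ s, p s * x s) + c ^ 2 * (∑ s, p s) := by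
    calc ∑ s, p s * (x s - c) ^ 2
        = ∑ s, (p s * x s ^ 2 - 2 * c * (p s * x s) + c ^ 2 * p s) :=
          Finset.sum_congr rfl fun s _ => by ring
      _ = _ := by
          rw [Finset.sum_add_distrib, Finset.sum_sub_distrib, ← Finset.mul_sum, ← Finset.mul_sum]
  rw [expand, hp1, ← hc]
  nlinarith [sq_nonneg c]
lemma maurey_sum_swap3 {A B C : Type*} [Fintype A] [Fintype B] [Fintype C]
    (f : A → B → C → ℝ) :
    ∑ i : A, ∑ j : B, ∑ s : C, f i j s = ∑ s : C, ∑ i : A, ∑ j : B, f i j s := by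
  have h1 : ∀ i : A, ∑ j : B, ∑ s : C, f i j s = ∑ s : C, ∑ j : B, f i j s :=
    fun i => Finset.sum_comm
  simp_rw [h1]
  exact Finset.sum_comm

lemma maurey_key {M N : Type*} [Fintype M] [Fintype N] (hk : 0 < k) (p : ι → ℝ)
    (hp1 : ∑ s, p s = 1) (D : ι → M → N → ℝ) (hmean : ∀ i j, ∑ s, p s * D s i j = 0) :
    ∑ t : Fin k → ι, (∏ l, p (t l)) * (∑ i, ∑ j, ((k:ℝ)⁻¹ * ∑ l, D (t l) i j) ^ 2)
      = (k:ℝ)⁻¹ * ∑ s, p s * (∑ i, ∑ j, (D s i j) ^ 2) := by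
  have hk' : (k:ℝ) ≠ 0 := Nat.cast_ne_zero.mpr hk.ne'
  have main : ∀ (i : M) (j : N),
      ∑ t : Fin k → ι, (∏ l, p (t l)) * ((k:ℝ)⁻¹ * ∑ l, D (t l) i j) ^ 2
        = (k:ℝ)⁻¹ * ∑ s, p s * (D s i j) ^ 2 := by
    intro i j
    have e1 : ∀ t : Fin k → ι, (∏ l, p (t l)) * ((k:ℝ)⁻¹ * ∑ l, D (t l) i j) ^ 2
        = ((k:ℝ)⁻¹)^2 * ∑ l1, ∑ l2, (∏ l, p (t l)) * (D (t l1) i j * D (t l2) i j) := by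
      intro t
      rw [mul_pow, sq (∑ l, D (t l) i j), Finset.sum_mul_sum]
      rw [Finset.mul_sum]
      simp_rw [Finset.mul_sum]
      exact Finset.sum_congr rfl fun l1 _ => Finset.sum_congr rfl fun l2 _ => by ring
    simp_rw [e1]
    rw [← Finset.mul_sum]
    rw [Finset.sum_comm]
    have e2 : ∀ l1 : Fin k, ∑ t : Fin k → ι, ∑ l2, (∏ l, p (t l)) * (D (t l1) i j * D (t l2) i j)
        = ∑ l2, ∑ t : Fin k → ι, (∏ l, p (t l)) * (D (t l1) i j * D (t l2) i j) :=
      fun l1 => Finset.sum_comm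
    simp_rw [e2]
    have e3 : ∀ l1 l2 : Fin k,
        ∑ t : Fin k → ι, (∏ l, p (t l)) * (D (t l1) i j * D (t l2) i j)
          = if l1 = l2 then ∑ s, p s * (D s i j)^2 else 0 := by
      intro l1 l2
      by_cases h : l1 = l2
      · subst h
        simp only [if_true]
        have := maurey_exp_one p (fun s => D s i j * D s i j) hp1 l1
        rw [this]
        exact Finset.sum_congr rfl fun s _ => by ring
      · rw [maurey_exp_pair p (fun s => D s i j) (fun s => D s i j) hp1 l1 l2 h, hmean i j]
        simp [h]
    simp_rw [e3]
    simp_rw [Finset.sum_ite_eq Finset.univ _ (fun _ => ∑ s, p s * (D s i j)^2)]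
    simp only [Finset.mem_univ, if_true, Finset.sum_const, Finset.card_univ, Fintype.card_fin,
      nsmul_eq_mul]
    field_simp
  calc ∑ t : Fin k → ι, (∏ l, p (t l)) * (∑ i, ∑ j, ((k:ℝ)⁻¹ * ∑ l, D (t l) i j) ^ 2)
      = ∑ i, ∑ j, ∑ t : Fin k → ι, (∏ l, p (t l)) * ((k:ℝ)⁻¹ * ∑ l, D (t l) i j) ^ 2 := by
        simp_rw [Finset.mul_sum]
        exact (maurey_sum_swap3 _).symm
    _ = ∑ i, ∑ j, (k:ℝ)⁻¹ * ∑ s, p s * (D s i j) ^ 2 :=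
        Finset.sum_congr rfl fun i _ => Finset.sum_congr rfl fun j _ => main i j
    _ = (k:ℝ)⁻¹ * ∑ s, p s * (∑ i, ∑ j, (D s i j) ^ 2) := by
        simp_rw [Finset.mul_sum]
        exact maurey_sum_swap3 _
lemma maurey_select {m d n : ℕ} (hk : 0 < k)
    (p : ι → ℝ) (hp0 : ∀ s, 0 ≤ p s) (hp1 : ∑ s, p s = 1)
    (A : ι → Matrix (Fin m) (Fin d) ℝ) (W : Matrix (Fin m) (Fin d) ℝ)
    (X : Matrix (Fin d) (Fin n) ℝ)
    (hmean : ∀ i q, ∑ s, p s * A s i q = W i q)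
    (ε : ℝ) (hε : 0 < ε)
    (hsecond : ∀ s, ∑ i, ∑ j, ((A s * X) i j) ^ 2 ≤ (k:ℝ) * ε ^ 2) :
    ∃ t : Fin k → ι,
      ∑ i, ∑ j, ((W * X - ((k:ℝ)⁻¹ • ∑ l, A (t l)) * X) i j) ^ 2 ≤ ε ^ 2 := by
  have hk' : (0:ℝ) < (k:ℝ) := by exact_mod_cast hk
  -- mean of A s * X is W * X, entrywise
  have hWX : ∀ i j, ∑ s, p s * (A s * X) i j = (W * X) i j := by
    intro i j
    have swap : ∑ s, p s * (A s * X) i j = ∑ q, (∑ s, p s * A s i q) * X q j := by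
      simp_rw [Matrix.mul_apply, Finset.mul_sum]
      rw [Finset.sum_comm]
      exact Finset.sum_congr rfl fun q _ =>
        (by rw [Finset.sum_mul]; exact Finset.sum_congr rfl fun s _ => by ring)
    rw [swap]
    simp_rw [hmean]
    rw [Matrix.mul_apply]
  set D : ι → Fin m → Fin n → ℝ := fun s i j => (A s * X) i j - (W * X) i j with hD
  have hmeanD : ∀ i j, ∑ s, p s * D s i j = 0 := by
    intro i j
    have : ∑ s, p s * D s i j
        = (∑ s, p s * (A s * X) i j) - (∑ s, p s) * (W * X) i j := by
      rw [Finset.sum_mul, ← Finset.sum_sub_distrib]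
      exact Finset.sum_congr rfl fun s _ => by simp [hD]; ring
    rw [this, hWX, hp1, one_mul, sub_self]
  -- the expectation is at most ε²
  have key := maurey_key hk p hp1 D hmeanD
  have bound : (k:ℝ)⁻¹ * ∑ s, p s * (∑ i, ∑ j, (D s i j) ^ 2) ≤ ε ^ 2 := by
    have step1 : ∀ s, (∑ i, ∑ j, (D s i j) ^ 2) ≤ (k:ℝ) * ε ^ 2 → True := fun _ _ => trivial
    have hvar : ∑ s, p s * (∑ i, ∑ j, (D s i j) ^ 2)
        ≤ ∑ s, p s * (∑ i, ∑ j, ((A s * X) i j) ^ 2) := by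
      have swap1 : ∑ s, p s * (∑ i, ∑ j, (D s i j) ^ 2)
          = ∑ i, ∑ j, ∑ s, p s * (D s i j) ^ 2 := by
        simp_rw [Finset.mul_sum]
        rw [Finset.sum_comm]
        exact Finset.sum_congr rfl fun i _ => Finset.sum_comm
      have swap2 : ∑ s, p s * (∑ i, ∑ j, ((A s * X) i j) ^ 2)
          = ∑ i, ∑ j, ∑ s, p s * ((A s * X) i j) ^ 2 := by
        simp_rw [Finset.mul_sum]
        rw [Finset.sum_comm]
        exact Finset.sum_congr rfl fun i _ => Finset.sum_comm
      rw [swap1, swap2]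
      refine Finset.sum_le_sum fun i _ => Finset.sum_le_sum fun j _ => ?_
      have := maurey_var_le p (fun s => (A s * X) i j) hp1
      have hDx : ∀ s, D s i j = (A s * X) i j - ∑ s', p s' * (A s' * X) i j := by
        intro s; rw [hWX i j]
      simp_rw [hDx]
      exact this
    have h2 : ∑ s, p s * (∑ i, ∑ j, ((A s * X) i j) ^ 2) ≤ (k:ℝ) * ε ^ 2 := by
      calc ∑ s, p s * (∑ i, ∑ j, ((A s * X) i j) ^ 2)
          ≤ ∑ s, p s * ((k:ℝ) * ε ^ 2) :=
            Finset.sum_le_sum fun s _ =>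
              mul_le_mul_of_nonneg_left (hsecond s) (hp0 s)
        _ = (k:ℝ) * ε ^ 2 := by rw [← Finset.sum_mul, hp1, one_mul]
    calc (k:ℝ)⁻¹ * ∑ s, p s * (∑ i, ∑ j, (D s i j) ^ 2)
        ≤ (k:ℝ)⁻¹ * ((k:ℝ) * ε ^ 2) := by
          exact mul_le_mul_of_nonneg_left (hvar.trans h2) (by positivity)
      _ = ε ^ 2 := by field_simp
  clear key
  -- there exists a tuple achieving at most the mean
  have hPsum : ∑ t : Fin k → ι, (∏ l, p (t l)) = 1 := by
    rw [← Fintype.prod_sum (fun _ s => p s)]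
    simp [hp1]
  have hP0 : ∀ t : Fin k → ι, 0 ≤ ∏ l, p (t l) :=
    fun t => Finset.prod_nonneg fun l _ => hp0 (t l)
  by_contra hcon
  push_neg at hcon
  -- get a tuple with positive probability
  have hex : ∃ t : Fin k → ι, 0 < ∏ l, p (t l) := by
    by_contra hall
    push_neg at hall
    have : ∑ t : Fin k → ι, (∏ l, p (t l)) ≤ 0 :=
      Finset.sum_nonpos fun t _ => hall t
    rw [hPsum] at this; linarith
  obtain ⟨t0, ht0⟩ := hex
  have hQ : ∀ t : Fin k → ι,
      ∑ i, ∑ j, ((W * X - ((k:ℝ)⁻¹ • ∑ l, A (t l)) * X) i j) ^ 2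
        = ∑ i, ∑ j, ((k:ℝ)⁻¹ * ∑ l, D (t l) i j) ^ 2 := by
    intro t
    refine Finset.sum_congr rfl fun i _ => Finset.sum_congr rfl fun j _ => ?_
    have entry : (W * X - ((k:ℝ)⁻¹ • ∑ l, A (t l)) * X) i j
        = -((k:ℝ)⁻¹ * ∑ l, D (t l) i j) := by
      have h1 : (((k:ℝ)⁻¹ • ∑ l, A (t l)) * X) i j
          = (k:ℝ)⁻¹ * ∑ l, (A (t l) * X) i j := by
        rw [Matrix.smul_mul, Matrix.sum_mul]
        simp [Matrix.sum_apply]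
      have h2 : ∑ l, D (t l) i j
          = (∑ l, (A (t l) * X) i j) - (k:ℝ) * (W * X) i j := by
        rw [hD]
        simp only
        rw [Finset.sum_sub_distrib, Finset.sum_const, Finset.card_univ, Fintype.card_fin,
          nsmul_eq_mul]
      rw [Matrix.sub_apply, h1, h2]
      field_simp
      ring
    rw [entry, neg_sq]
  have hstrict : ε ^ 2 < ∑ t : Fin k → ι,
      (∏ l, p (t l)) * (∑ i, ∑ j, ((k:ℝ)⁻¹ * ∑ l, D (t l) i j) ^ 2) := by
    have : ∀ t : Fin k → ι,
        (∏ l, p (t l)) * ε ^ 2 ≤ (∏ l, p (t l)) * (∑ i, ∑ j, ((k:ℝ)⁻¹ * ∑ l, D (t l) i j) ^ 2) :=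
      fun t => mul_le_mul_of_nonneg_left (le_of_lt (by rw [← hQ t]; exact hcon t)) (hP0 t)
    have hlt : (∏ l, p (t0 l)) * ε ^ 2
        < (∏ l, p (t0 l)) * (∑ i, ∑ j, ((k:ℝ)⁻¹ * ∑ l, D (t0 l) i j) ^ 2) :=
      (mul_lt_mul_iff_right₀ ht0).mpr (by rw [← hQ t0]; exact hcon t0)
    calc ε ^ 2 = ∑ t : Fin k → ι, (∏ l, p (t l)) * ε ^ 2 := by
          rw [← Finset.sum_mul, hPsum, one_mul]
      _ < _ := Finset.sum_lt_sum (fun t _ => this t) ⟨t0, Finset.mem_univ t0, hlt⟩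
  have key2 := maurey_key hk p hp1 D hmeanD
  rw [key2] at hstrict
  linarith
end maureyAux

/-- Uniform covering number bound: there is a single finite set `C` of at most
`(2dm)^⌈a²b²/ε²⌉` matrices that, for every input matrix `X` in the class `𝒳`
(with `‖X‖_F ≤ b`) and every weight `W` with entrywise 1-norm at most `a`,
contains some `W'` with `‖WX − W'X‖_F ≤ ε`. -/
theorem stmt_3 {d m n : ℕ} (hd : 0 < d) (hm : 0 < m) (a b ε : ℝ)
    (ha : 0 < a) (hb : 0 < b) (hε : 0 < ε)
    (𝒳 : Set (Matrix (Fin d) (Fin n) ℝ)) (hX : ∀ X ∈ 𝒳, ‖X‖ ≤ b) :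
    ∃ C : Finset (Matrix (Fin m) (Fin d) ℝ),
      C.card ≤ (2 * d * m) ^ ⌈a ^ 2 * b ^ 2 / ε ^ 2⌉₊ ∧
      ∀ X ∈ 𝒳, ∀ W : Matrix (Fin m) (Fin d) ℝ,
        (∑ i, ∑ j, |W i j|) ≤ a → ∃ W' ∈ C, ‖W * X - W' * X‖ ≤ ε := by
  classical
  set k := ⌈a ^ 2 * b ^ 2 / ε ^ 2⌉₊ with hkdef
  have hkpos : 0 < k := Nat.ceil_pos.mpr (by positivity)
  have hk' : (0:ℝ) < (k:ℝ) := by exact_mod_cast hkpos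
  set A : Bool × Fin m × Fin d → Matrix (Fin m) (Fin d) ℝ :=
    fun s => Matrix.of fun i j =>
      if i = s.2.1 ∧ j = s.2.2 then (if s.1 then a else -a) else 0 with hA
  refine ⟨Finset.image (fun t : Fin k → Bool × Fin m × Fin d =>
    (k:ℝ)⁻¹ • ∑ l, A (t l)) Finset.univ, ?_, ?_⟩
  · refine le_trans Finset.card_image_le ?_
    rw [Finset.card_univ, Fintype.card_fun]
    simp only [Fintype.card_prod, Fintype.card_bool, Fintype.card_fin]
    have : 2 * (m * d) = 2 * d * m := by ring
    rw [this]
  · intro X hXmem W hW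
    have hXb : ∑ i, ∑ j, (X i j) ^ 2 ≤ b ^ 2 := by
      rw [← maurey_frob_sq X]
      have := hX X hXmem
      nlinarith [norm_nonneg X]
    set L := ∑ i, ∑ j, |W i j| with hL
    have hLnn : 0 ≤ L := Finset.sum_nonneg fun i _ => Finset.sum_nonneg fun j _ => abs_nonneg _
    have h2md : (0:ℝ) < 2 * (m:ℝ) * d := by positivity
    set r := (a - L) / (2 * (m:ℝ) * d * a) with hr
    have hrnn : 0 ≤ r := div_nonneg (by linarith) (by positivity)
    set p : Bool × Fin m × Fin d → ℝ :=
      fun s => (if s.1 then max (W s.2.1 s.2.2) 0 else max (-W s.2.1 s.2.2) 0) / a + r with hp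
    have hp0 : ∀ s, 0 ≤ p s := by
      intro s
      have : (0:ℝ) ≤ (if s.1 then max (W s.2.1 s.2.2) 0 else max (-W s.2.1 s.2.2) 0) := by
        split <;> exact le_max_right _ _
      have := div_nonneg this ha.le
      simp only [hp]
      linarith
    have hp1 : ∑ s, p s = 1 := by
      simp only [hp]
      rw [Finset.sum_add_distrib]
      have hsumq : ∑ s : Bool × Fin m × Fin d,
          (if s.1 then max (W s.2.1 s.2.2) 0 else max (-W s.2.1 s.2.2) 0) / a = L / a := by
        rw [← Finset.sum_div]
        congr 1
        rw [Fintype.sum_prod_type, Fintype.sum_bool]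
        simp only [if_true, if_false]
        rw [← Finset.sum_add_distrib]
        have : ∀ y : Fin m × Fin d,
            max (W y.1 y.2) 0 + max (-W y.1 y.2) 0 = |W y.1 y.2| :=
          fun y => maurey_max_add _
        calc ∑ y : Fin m × Fin d, (max (W y.1 y.2) 0 + max (-W y.1 y.2) 0)
            = ∑ y : Fin m × Fin d, |W y.1 y.2| := Finset.sum_congr rfl fun y _ => this y
          _ = L := by rw [hL, Fintype.sum_prod_type]
      rw [hsumq]
      have hcard : ∑ _s : Bool × Fin m × Fin d, r = (2 * (m:ℝ) * d) * r := by
        rw [Finset.sum_const, Finset.card_univ]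
        simp only [Fintype.card_prod, Fintype.card_bool, Fintype.card_fin, nsmul_eq_mul]
        push_cast
        ring
      rw [hcard, hr]
      field_simp
      ring
    have hmean : ∀ i q, ∑ s, p s * A s i q = W i q := by
      intro i q
      rw [Fintype.sum_prod_type, Fintype.sum_bool]
      have htrue : ∀ (sg : Bool), ∑ y : Fin m × Fin d, p (sg, y) * A (sg, y) i q
          = p (sg, i, q) * (if sg then a else -a) := by
        intro sg
        rw [Fintype.sum_prod_type]
        simp only [hA, Matrix.of_apply]
        simp [Finset.sum_ite_eq, mul_ite, mul_zero, ite_and]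
      rw [htrue true, htrue false]
      simp only [hp, if_true, if_false, Bool.false_eq_true]
      linear_combination maurey_max_sub (W i q) + (max (W i q) 0 - max (-W i q) 0) * (mul_inv_cancel₀ ha.ne')
    have hkeb : a ^ 2 * b ^ 2 ≤ (k:ℝ) * ε ^ 2 := by
      have h1 : a ^ 2 * b ^ 2 / ε ^ 2 ≤ (k:ℝ) := by rw [hkdef]; exact Nat.le_ceil _
      rw [div_le_iff₀ (by positivity)] at h1
      linarith
    have hAX : ∀ (s : Bool × Fin m × Fin d) (i : Fin m) (j : Fin n),
        (A s * X) i j = if i = s.2.1 then (if s.1 then a else -a) * X s.2.2 j else 0 := by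
      intro s i j
      rw [Matrix.mul_apply]
      simp only [hA, Matrix.of_apply, ite_and]
      by_cases hi : i = s.2.1
      · simp [hi, ite_mul, zero_mul, Finset.sum_ite_eq']
      · simp [hi]
    have hsecond : ∀ s, ∑ i, ∑ j, ((A s * X) i j) ^ 2 ≤ (k:ℝ) * ε ^ 2 := by
      intro s
      have step : ∑ i, ∑ j, ((A s * X) i j) ^ 2 = a ^ 2 * ∑ j, (X s.2.2 j) ^ 2 := by
        simp_rw [hAX]
        have hsq : ∀ (i : Fin m) (j : Fin n),
            (if i = s.2.1 then (if s.1 then a else -a) * X s.2.2 j else 0) ^ 2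
              = if i = s.2.1 then a ^ 2 * (X s.2.2 j) ^ 2 else 0 := by
          intro i j
          by_cases hi : i = s.2.1
          · simp only [hi, if_true]
            rcases s.1 with _ | _ <;> simp <;> ring
          · simp [hi]
        simp_rw [hsq]
        rw [Finset.sum_comm]
        simp_rw [Finset.sum_ite_eq' Finset.univ s.2.1 (fun _ => a ^ 2 * (X s.2.2 _) ^ 2)]
        simp [Finset.mul_sum]
      rw [step]
      have hrow : ∑ j, (X s.2.2 j) ^ 2 ≤ b ^ 2 := by
        refine le_trans ?_ hXb
        exact Finset.single_le_sum
          (f := fun i => ∑ j, (X i j) ^ 2)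
          (fun i _ => Finset.sum_nonneg fun j _ => sq_nonneg _) (Finset.mem_univ s.2.2)
      nlinarith [sq_nonneg a]
    obtain ⟨t, ht⟩ := maurey_select hkpos p hp0 hp1 A W X hmean ε hε hsecond
    refine ⟨(k:ℝ)⁻¹ • ∑ l, A (t l), Finset.mem_image_of_mem _ (Finset.mem_univ t), ?_⟩
    have hfs := maurey_frob_sq (W * X - ((k:ℝ)⁻¹ • ∑ l, A (t l)) * X)
    nlinarith [norm_nonneg (W * X - ((k:ℝ)⁻¹ • ∑ l, A (t l)) * X)]
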